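/- arXiv:2201.00881 — 2 statements merged into one kernel-verified Lean document; each statement's English description precedes it below -/
import Mathlib

section
/- Let n, d, m be integers with d ≥ 2, n ≥ 2d, gcd(d, n) = 1 and m ≥ 1, and let T = m·n jobs be scheduled by the round-robin policy with blocks B_1, …, B_T. Then for each k with 1 ≤ k ≤ d−1, the number of indices i ∈ {2, …, T} with |B_1 ∩ B_i| = k equals 2m, and the number of indices i ∈ {2, …, T} with |B_1 ∩ B_i| = d equals m − 1; all remaining indices satisfy |B_1 ∩ B_i| = 0. -/
/-!
Job `i + 1` occupies the arc of `d` consecutive residues starting at `v = i * d % n`, and for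
`d ≤ n` it meets the arc of job `1` in `(d - v) + (v + d - n)` residues: the piece `[v, d)` and
the wrap-around piece `[0, v + d - n)`, at most one of which is nonempty when `2 * d ≤ n`.
Since `d` is a unit mod `n`, as `i` runs through `0, …, m * n - 1` every start `v < n` occurs
exactly `m` times. Overlap `k ∈ [1, d)` comes from the two starts `d - k` and `n - d + k`,
overlap `d` only from `v = 0` (which includes `i = 0`, job `1` itself), and overlap `0` from the
`n + 1 - 2 * d` starts in `[d, n - d]`.
-/

open Finset Function

theorem Function.Periodic.count_mul {p : ℕ → Prop} [DecidablePred p] {n : ℕ}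
    (hp : Periodic p n) (m : ℕ) : Nat.count p (m * n) = m * Nat.count p n := by
  induction m with
  | zero => simp
  | succ m ih =>
    rw [Nat.succ_mul, Nat.count_add, ih, Nat.succ_mul]
    congr 2
    funext k
    simpa [add_comm] using hp.nat_mul m k

theorem Nat.injOn_mul_mod_range {d n : ℕ} (hdn : Coprime d n) :
    Set.InjOn (fun i => i * d % n) (range n) := fun _ hi _ hj hij =>
  (ModEq.cancel_right_of_coprime (coprime_comm.mp hdn) hij).eq_of_lt_of_lt
    (mem_range.mp hi) (mem_range.mp hj)

theorem Nat.image_mul_mod_range {d n : ℕ} (hdn : Coprime d n) :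
    (range n).image (fun i => i * d % n) = range n := by
  refine eq_of_subset_of_card_le (fun v hv => ?_)
    (Finset.card_image_of_injOn (injOn_mul_mod_range hdn)).ge
  obtain ⟨i, hi, rfl⟩ := mem_image.mp hv
  exact mem_range.mpr (mod_lt _ (zero_lt_of_lt (mem_range.mp hi)))

theorem Nat.count_comp_mul_mod {d n : ℕ} (hdn : Coprime d n) (p : ℕ → Prop)
    [DecidablePred p] : count (fun i => p (i * d % n)) n = count p n := by
  rw [count_eq_card_filter_range, count_eq_card_filter_range]
  conv_rhs => rw [← image_mul_mod_range hdn, filter_image]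
  rw [Finset.card_image_of_injOn ((injOn_mul_mod_range hdn).mono (filter_subset _ _))]

theorem Nat.count_comp_mul_mod_mul {d n : ℕ} (hdn : Coprime d n) (p : ℕ → Prop)
    [DecidablePred p] (m : ℕ) : count (fun i => p (i * d % n)) (m * n) = m * count p n := by
  rw [Periodic.count_mul (fun i => by simp [add_mul]), count_comp_mul_mod hdn]

theorem card_filter_Icc_two_add_ite (P : ℕ → Prop) [DecidablePred P] {T : ℕ} (hT : 0 < T) :
    #{i ∈ Icc 2 T | P i} + (if P 1 then 1 else 0) = Nat.count (fun i => P (i + 1)) T := by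
  obtain ⟨S, rfl⟩ := Nat.exists_eq_add_of_le' hT
  have hIcc : Icc 2 (S + 1) = (range S).map (addRightEmbedding 2) := by
    ext i
    simp only [mem_Icc, mem_map, mem_range, addRightEmbedding_apply]
    exact ⟨fun h => ⟨i - 2, by omega, by omega⟩, by rintro ⟨j, hj, rfl⟩; omega⟩
  rw [Nat.count_succ', Nat.count_eq_card_filter_range, hIcc, filter_map, card_map]
  rfl

def arc (n a d : ℕ) : Finset (ZMod n) := (range d).image fun j => ((a + j : ℕ) : ZMod n)

def arcOverlap (n d v : ℕ) : ℕ := (d - v) + (v + d - n)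

theorem arc_mod (n a d : ℕ) : arc n (a % n) d = arc n a d := by
  simp only [arc, Nat.cast_add, ZMod.natCast_mod]

theorem natCast_mem_arc_iff {n v d j : ℕ} (hdn : d ≤ n) (hv : v < n) (hj : j < n) :
    (j : ZMod n) ∈ arc n v d ↔ v ≤ j ∧ j < v + d ∨ j + n < v + d := by
  simp only [arc, mem_image, mem_range, ZMod.natCast_eq_natCast_iff', Nat.mod_eq_of_lt hj]
  constructor
  · rintro ⟨l, hl, hmod⟩
    rcases lt_or_ge (v + l) n with h | h
    · rw [Nat.mod_eq_of_lt h] at hmod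
      omega
    · rw [Nat.mod_eq_sub_mod h, Nat.mod_eq_of_lt (by omega)] at hmod
      omega
  · rintro (h | h)
    · exact ⟨j - v, by omega, by rw [Nat.add_sub_cancel' h.1, Nat.mod_eq_of_lt hj]⟩
    · refine ⟨j + n - v, by omega, ?_⟩
      rw [Nat.add_sub_cancel' (by omega), Nat.add_mod_right, Nat.mod_eq_of_lt hj]

theorem card_arc_zero_inter_arc {n v d : ℕ} (hdn : d ≤ n) (hv : v < n) :
    #(arc n 0 d ∩ arc n v d) = arcOverlap n d v := by
  have hfilter : (range d).filter (fun j : ℕ => (j : ZMod n) ∈ arc n v d)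
      = Ico v d ∪ range (v + d - n) := by
    ext j
    simp only [mem_filter, mem_range, mem_union, mem_Ico]
    constructor
    · rintro ⟨hj, hmem⟩
      rw [natCast_mem_arc_iff hdn hv (by omega)] at hmem
      omega
    · intro h
      exact ⟨by omega, (natCast_mem_arc_iff hdn hv (by omega)).mpr (by omega)⟩
  have hinj : Set.InjOn (fun j : ℕ => (j : ZMod n)) (range d) := fun i hi j hj hij => by
    simp only [coe_range, Set.mem_Iio] at hi hj
    rwa [ZMod.natCast_eq_natCast_iff', Nat.mod_eq_of_lt (by omega),
      Nat.mod_eq_of_lt (by omega)] at hij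
  have harc : arc n 0 d = (range d).image (fun j : ℕ => (j : ZMod n)) := by
    simp only [arc, zero_add]
  have hdisj : Disjoint (Ico v d) (range (v + d - n)) := disjoint_left.mpr fun j hj hj' => by
    simp only [mem_Ico, mem_range] at hj hj'
    omega
  rw [harc, ← filter_mem_eq_inter, filter_image,
    card_image_of_injOn (hinj.mono (filter_subset _ _)), hfilter, card_union_of_disjoint hdisj,
    Nat.card_Ico, card_range, arcOverlap]

theorem count_arcOverlap_eq_of_pos_of_lt {n d k : ℕ} (hn : 2 * d ≤ n) (hk : 0 < k)
    (hkd : k < d) : Nat.count (arcOverlap n d · = k) n = 2 := by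
  have : (range n).filter (arcOverlap n d · = k) = {d - k, n - d + k} := by
    ext v
    simp only [mem_filter, mem_range, mem_insert, mem_singleton]
    unfold arcOverlap
    omega
  rw [Nat.count_eq_card_filter_range, this, card_pair (by omega)]

theorem count_arcOverlap_eq_self {n d : ℕ} (hd : 0 < d) (hn : 2 * d ≤ n) :
    Nat.count (arcOverlap n d · = d) n = 1 := by
  have : (range n).filter (arcOverlap n d · = d) = {0} := by
    ext v
    simp only [mem_filter, mem_range, mem_singleton]
    unfold arcOverlap
    omega
  rw [Nat.count_eq_card_filter_range, this, card_singleton]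

theorem count_arcOverlap_eq_zero {n d : ℕ} (hd : 0 < d) (hn : 2 * d ≤ n) :
    Nat.count (arcOverlap n d · = 0) n = n + 1 - 2 * d := by
  have : (range n).filter (arcOverlap n d · = 0) = Icc d (n - d) := by
    ext v
    simp only [mem_filter, mem_range, mem_Icc]
    unfold arcOverlap
    omega
  rw [Nat.count_eq_card_filter_range, this, Nat.card_Icc]
  omega

/-- Overlap distribution of the round-robin policy with `T = m·n` jobs and blocks
`B i = {((i-1)·d + j) mod n : j < d}`: for each `1 ≤ k ≤ d-1` exactly `2m` of the
indices `i ∈ {2,…,T}` satisfy `|B 1 ∩ B i| = k`, exactly `m-1` of them satisfy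
`|B 1 ∩ B i| = d`, and all remaining indices satisfy `|B 1 ∩ B i| = 0`. -/
theorem roundRobin_overlap_distribution (n d m : ℕ) (hd : 2 ≤ d) (hn : 2 * d ≤ n)
    (hgcd : Nat.gcd d n = 1) (hm : 1 ≤ m) (T : ℕ) (hT : T = m * n)
    (B : ℕ → Finset (ZMod n))
    (hB : ∀ i : ℕ, B i = (Finset.range d).image (fun j => (((i - 1) * d + j : ℕ) : ZMod n))) :
    (∀ k : ℕ, 1 ≤ k → k ≤ d - 1 →
      ((Finset.Icc 2 T).filter (fun i => (B 1 ∩ B i).card = k)).card = 2 * m) ∧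
    ((Finset.Icc 2 T).filter (fun i => (B 1 ∩ B i).card = d)).card = m - 1 ∧
    ((Finset.Icc 2 T).filter (fun i => (B 1 ∩ B i).card = 0)).card
      = (T - 1) - 2 * m * (d - 1) - (m - 1) := by
  subst hT
  have hovl : ∀ i, #(B 1 ∩ B (i + 1)) = arcOverlap n d (i * d % n) := fun i => by
    rw [hB, hB, Nat.sub_self, zero_mul, Nat.add_sub_cancel]
    change #(arc n 0 d ∩ arc n (i * d) d) = _
    rw [← arc_mod n (i * d), card_arc_zero_inter_arc (by omega) (Nat.mod_lt _ (by omega))]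
  have hcount : ∀ k, #{i ∈ Icc 2 (m * n) | #(B 1 ∩ B i) = k} + (if d = k then 1 else 0)
      = m * Nat.count (arcOverlap n d · = k) n := fun k => by
    have hself : #(B 1 ∩ B 1) = d := by
      have := hovl 0
      simp only [zero_add, zero_mul, Nat.zero_mod, arcOverlap] at this
      omega
    calc _ = #{i ∈ Icc 2 (m * n) | #(B 1 ∩ B i) = k}
          + (if #(B 1 ∩ B 1) = k then 1 else 0) := by rw [hself]
      _ = Nat.count (fun i => #(B 1 ∩ B (i + 1)) = k) (m * n) :=
          card_filter_Icc_two_add_ite _ (Nat.mul_pos (by omega) (by omega))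
      _ = _ := by simp only [hovl]; exact Nat.count_comp_mul_mod_mul hgcd (arcOverlap n d · = k) m
  refine ⟨fun k hk hkd => ?_, ?_, ?_⟩
  · simpa [show d ≠ k by omega, count_arcOverlap_eq_of_pos_of_lt hn hk (by omega), mul_comm]
      using hcount k
  · have := hcount d
    rw [if_pos rfl, count_arcOverlap_eq_self (by omega) hn] at this
    omega
  · have := hcount 0
    rw [if_neg (by omega), count_arcOverlap_eq_zero (by omega) hn, add_zero] at this
    have hzero : m * (n + 1 - 2 * d) = m * n + m - 2 * (m * d) := by
      rw [Nat.mul_sub, mul_add, mul_one, mul_left_comm]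
    have hpartial : 2 * m * (d - 1) = 2 * (m * d) - 2 * m := by
      rw [Nat.mul_sub, mul_one, mul_assoc]
    have hmd : m ≤ m * d := by nlinarith
    have hmn : 2 * (m * d) ≤ m * n := by nlinarith
    omega
end

section
/- Let n, d, m be integers with d ≥ 2, n ≥ 2d, gcd(d, n) = 1 and m ≥ 1, and let T = m·n jobs be scheduled by the round-robin policy with blocks B_1, …, B_T. Then ∑_{i=2}^{T} |B_1 ∩ B_i| = m·d² − d, and consequently the average overlap (∑_{i=2}^{T} |B_1 ∩ B_i|)/(T − 1) converges to d²/n as m → ∞; i.e., the average overlap factor of the round-robin policy is AOF_round-robin = n/d². -/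
/-!
Block `B (k + 1)` is the translate `k·d + B 1` in `ZMod n`. Since `d` is a unit mod `n`, as `k`
runs over `m·n` consecutive integers the shift `k·d` runs `m` times over all of `ZMod n`.
Summing `|A ∩ (g + A)|` for `A = B 1` over all `g` counts every pair of `A × A` once, giving
`|A|² = d²`.
Removing the term `i = 1`, which is `|B 1| = d`, leaves `m·d² - d`; dividing by `m·n - 1`
gives the limit `d²/n`.
-/

open Filter Finset Pointwise Topology

theorem sum_card_inter_vadd_finset {G : Type*} [AddGroup G] [Fintype G] [DecidableEq G]
    (A : Finset G) : ∑ g : G, #(A ∩ (g +ᵥ A)) = #A ^ 2 := by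
  calc ∑ g : G, #(A ∩ (g +ᵥ A))
      = ∑ g : G, ∑ a ∈ A, if a ∈ g +ᵥ A then 1 else 0 := by
        simp only [← filter_mem_eq_inter, card_filter]
    _ = ∑ a ∈ A, ∑ g : G, if a ∈ g +ᵥ A then 1 else 0 := sum_comm
    _ = ∑ _a ∈ A, #A := sum_congr rfl fun a _ => by
        rw [← Fintype.sum_equiv (Equiv.subLeft a) (fun h => if h ∈ A then 1 else 0) _
          (fun h => by simp [← neg_vadd_mem_iff]), sum_boole, filter_mem_eq_inter, univ_inter,
          Nat.cast_id]
    _ = #A ^ 2 := by rw [sum_const, smul_eq_mul, sq]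

theorem image_range_natCast_add {R : Type*} [AddMonoidWithOne R] [DecidableEq R] (a d : ℕ) :
    (range d).image (fun j => ((a + j : ℕ) : R)) = (a : R) +ᵥ (range d).image Nat.cast := by
  simp [← image_vadd, image_image, Function.comp_def]

namespace ZMod

theorem card_image_natCast_range {n d : ℕ} (h : d ≤ n) :
    #((range d).image (Nat.cast : ℕ → ZMod n)) = d := by
  rw [card_image_of_injOn, card_range]
  intro a ha b hb hab
  simp only [coe_range, Set.mem_Iio] at ha hb
  simpa [val_natCast_of_lt (ha.trans_le h), val_natCast_of_lt (hb.trans_le h)]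
    using congrArg val hab

variable {n : ℕ} [NeZero n] {M : Type*} [AddCommMonoid M]

theorem sum_range_natCast (f : ZMod n → M) : ∑ k ∈ range n, f k = ∑ s, f s :=
  sum_nbij' Nat.cast val (fun _ _ => mem_univ _) (fun s _ => mem_range.2 (val_lt s))
    (fun _ hk => val_natCast_of_lt (mem_range.1 hk)) (fun s _ => natCast_zmod_val s)
    (fun _ _ => rfl)

theorem sum_range_mul_natCast (f : ZMod n → M) (m : ℕ) :
    ∑ k ∈ range (m * n), f k = m • ∑ s, f s := by
  induction m with
  | zero => simp
  | succ m ih =>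
    rw [add_mul, one_mul, sum_range_add, ih, succ_nsmul, ← sum_range_natCast]
    simp

theorem sum_range_mul_natCast_mul_unit (f : ZMod n → M) {u : ZMod n} (hu : IsUnit u) (m : ℕ) :
    ∑ k ∈ range (m * n), f (k * u) = m • ∑ s, f s := by
  rw [sum_range_mul_natCast (fun s => f (s * u))]
  exact congrArg (m • ·) (Equiv.sum_comp (Units.mulRight hu.unit) f)

end ZMod

theorem tendsto_mul_sub_div_mul_sub (a b c e : ℝ) (hc : c ≠ 0) :
    Tendsto (fun m : ℕ => (a * m - b) / (c * m - e)) atTop (𝓝 (a / c)) := by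
  have hinv := tendsto_inv_atTop_nhds_zero_nat (𝕜 := ℝ)
  have h : Tendsto (fun m : ℕ => (a - b * (m : ℝ)⁻¹) / (c - e * (m : ℝ)⁻¹)) atTop
      (𝓝 ((a - b * 0) / (c - e * 0))) :=
    (tendsto_const_nhds.sub (hinv.const_mul b)).div
      (tendsto_const_nhds.sub (hinv.const_mul e)) (by simpa using hc)
  simp only [mul_zero, sub_zero] at h
  refine h.congr' ?_
  filter_upwards [eventually_ne_atTop 0] with m hm
  have hm' : (m : ℝ) ≠ 0 := Nat.cast_ne_zero.2 hm
  rw [← mul_div_mul_right _ _ hm', sub_mul, sub_mul, inv_mul_cancel_right₀ hm',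
    inv_mul_cancel_right₀ hm']

theorem roundRobin_AOF_general (n d : ℕ) (hn : 2 * d ≤ n)
    (hgcd : Nat.gcd d n = 1)
    (B : ℕ → Finset (ZMod n))
    (hB : ∀ i : ℕ, B i = (Finset.range d).image (fun j => (((i - 1) * d + j : ℕ) : ZMod n))) :
    (∀ m : ℕ, 1 ≤ m →
      ∑ i ∈ Finset.Icc 2 (m * n), (B 1 ∩ B i).card = m * d ^ 2 - d) ∧
    Tendsto (fun m : ℕ =>
        (∑ i ∈ Finset.Icc 2 (m * n), ((B 1 ∩ B i).card : ℝ)) / ((m : ℝ) * n - 1))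
      atTop (nhds ((d : ℝ) ^ 2 / n)) := by
  -- `n = 0` would force `d = 0`, but `gcd 0 0 = 0`.
  have : NeZero n := ⟨by rintro rfl; simp_all⟩
  set A : Finset (ZMod n) := (range d).image Nat.cast
  have hA : #A = d := ZMod.card_image_natCast_range (by omega)
  have hB_succ (k : ℕ) : B (k + 1) = ((k : ZMod n) * d) +ᵥ A := by
    rw [hB, Nat.add_sub_cancel, image_range_natCast_add, Nat.cast_mul]
  have hB_one : B 1 = A := by simpa using hB_succ 0
  have hsum_Icc_one (m : ℕ) : ∑ i ∈ Icc 1 (m * n), #(B 1 ∩ B i) = m * d ^ 2 := by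
    rw [← Ico_add_one_right_eq_Icc, sum_Ico_eq_sum_range, Nat.add_sub_cancel]
    simp_rw [hB_one, add_comm 1, hB_succ]
    rw [ZMod.sum_range_mul_natCast_mul_unit (fun s => #(A ∩ (s +ᵥ A)))
      ((ZMod.isUnit_iff_coprime d n).2 hgcd), sum_card_inter_vadd_finset, hA, smul_eq_mul]
  have hsum (m : ℕ) (hm : 1 ≤ m) : ∑ i ∈ Icc 2 (m * n), #(B 1 ∩ B i) = m * d ^ 2 - d := by
    have hmn : 1 ≤ m * n := Nat.one_le_iff_ne_zero.2 (mul_ne_zero (by omega) (NeZero.ne n))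
    rw [← hsum_Icc_one, ← add_sum_Ioc_eq_sum_Icc hmn, ← Icc_add_one_left_eq_Ioc, inter_self,
      hB_one, hA, Nat.add_sub_cancel_left]
    rfl
  refine ⟨hsum, (tendsto_mul_sub_div_mul_sub _ d _ 1 (by simp [NeZero.ne n])).congr' ?_⟩
  filter_upwards [eventually_ge_atTop 1] with m hm
  have hd_le : d ≤ m * d ^ 2 :=
    (Nat.le_self_pow two_ne_zero d).trans (Nat.le_mul_of_pos_left _ hm)
  rw [← Nat.cast_sum, hsum m hm, Nat.cast_sub hd_le]
  push_cast
  ring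

/-- Average overlap factor of the round-robin policy: with `T = m·n` jobs and blocks
`B i = {((i-1)·d + j) mod n : j < d}`, one has `∑_{i=2}^{T} |B 1 ∩ B i| = m·d² - d`,
and the average overlap `(∑_{i=2}^{T} |B 1 ∩ B i|)/(T-1)` converges to `d²/n` as
`m → ∞` (AOF_round-robin = n/d²). -/
theorem roundRobin_AOF (n d : ℕ) (hd : 2 ≤ d) (hn : 2 * d ≤ n)
    (hgcd : Nat.gcd d n = 1)
    (B : ℕ → Finset (ZMod n))
    (hB : ∀ i : ℕ, B i = (Finset.range d).image (fun j => (((i - 1) * d + j : ℕ) : ZMod n))) :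
    (∀ m : ℕ, 1 ≤ m →
      ∑ i ∈ Finset.Icc 2 (m * n), (B 1 ∩ B i).card = m * d ^ 2 - d) ∧
    Tendsto (fun m : ℕ =>
        (∑ i ∈ Finset.Icc 2 (m * n), ((B 1 ∩ B i).card : ℝ)) / ((m : ℝ) * n - 1))
      atTop (nhds ((d : ℝ) ^ 2 / n)) :=
  roundRobin_AOF_general n d hn hgcd B hB
end
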